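/- Let L ∈ Σ[∂] be monic of order n in normal form. If for every positive integer m not divisible by n the homogeneous system hGD_{n,m}(L) has only the zero constant solution (equivalently, V_m = 0 for all such m), then the centralizer of L is trivial: Z(L) = C[L]. -/

import Mathlib

/-!
Take `A ∈ Z(L)` of order `≤ m`, with `n ∤ m` when `n ≥ 2` (for `n = 1` the set `J_{n,m}` is
empty). Comparing leading terms in `[L, A]` shows that an operator commuting with `L` up to order
`n - 2` has a constant leading coefficient: `[∂ ^ n, a ∂ ^ k]` has leading term
`n (d a) ∂ ^ (n + k - 1)`, and `L` is in normal form. Peeling off leading terms therefore writes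
`A = ∑_{j ≤ m} c_j b_j` with constants `c_j`, where `b_j = L ^ (j / n)` if `n ∣ j` and `b_j = B_j`
otherwise. The part with `n ∣ j` lies in `C[L]`, so the rest `∑_{j ∈ J_{n,m}} c_j B_j` commutes
with `L`: it is a constant solution of `hGD_{n,m}(L)`, hence zero. Reading off leading
coefficients uses characteristic zero and a nonconstant element, which exists since `L` has
positive order.
-/

open scoped Classical
noncomputable section

variable {R : Type} [Ring R]

/-- Left multiplication by `a` as an additive endomorphism of `R`. -/
def mulOp (a : R) : AddMonoid.End R := AddMonoidHom.mulLeft a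

/-- The derivation as an additive endomorphism. -/
def derOp (d : R →+ R) : AddMonoid.End R := d

/-- `d` satisfies the Leibniz rule. -/
def IsDeriv (d : R →+ R) : Prop := ∀ a b : R, d (a * b) = d a * b + a * d b

/-- Additive group of differential operators of order at most `n`:
sums of terms `a · ∂^i` with `i ≤ n`. -/
def OpLE (d : R →+ R) (n : ℕ) : AddSubgroup (AddMonoid.End R) :=
  AddSubgroup.closure {P | ∃ (a : R) (i : ℕ), i ≤ n ∧ P = mulOp a * derOp d ^ i}

/-- `L` is a differential operator. -/
def IsOp (d : R →+ R) (L : AddMonoid.End R) : Prop := ∃ n, L ∈ OpLE d n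

/-- `L` is a differential operator of exact order `n`. -/
def HasOrd (d : R →+ R) (L : AddMonoid.End R) (n : ℕ) : Prop :=
  L ∈ OpLE d n ∧ ∀ k, L ∈ OpLE d k → n ≤ k

/-- `L` is a monic differential operator of order `n`. -/
def MonicOrd (d : R →+ R) (L : AddMonoid.End R) (n : ℕ) : Prop :=
  HasOrd d L n ∧ L - derOp d ^ n ∈ OpLE d (n - 1)

/-- The centralizer of `L` in the ring of differential operators. -/
def Cent (d : R →+ R) (L : AddMonoid.End R) : Set (AddMonoid.End R) :=
  {A | IsOp d A ∧ L * A = A * L}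

/-- Polynomials in `L` with constant coefficients. -/
def CPoly (d : R →+ R) (L : AddMonoid.End R) : Set (AddMonoid.End R) :=
  {P | ∃ p : Polynomial R, (∀ k, d (p.coeff k) = 0) ∧
      P = ∑ i ∈ Finset.range (p.natDegree + 1), mulOp (p.coeff i) * L ^ i}

/-- The level of `L`: smallest order of an element of `Z(L) \ C[L]`. -/
def Level (d : R →+ R) (L : AddMonoid.End R) (M : ℕ) : Prop :=
  (∃ Q ∈ Cent d L, Q ∉ CPoly d L ∧ HasOrd d Q M) ∧
  ∀ Q ∈ Cent d L, Q ∉ CPoly d L → ∀ q, HasOrd d Q q → M ≤ q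

/-- The index set `J_{n,m} = {1, ..., m} \\ nℤ`. -/
def Jset (n m : ℕ) : Finset ℕ := (Finset.range (m + 1)).filter (fun j => ¬ (n ∣ j))

/-- The operator `∑_{j ∈ J} c_j · B_j` associated to a coefficient vector `c`. -/
def theta {R : Type} [Ring R] (c : ℕ → R) (B : ℕ → AddMonoid.End R) (J : Finset ℕ) :
    AddMonoid.End R :=
  ∑ j ∈ J, mulOp (c j) * B j

/-- `V_m`: the constant solutions of the homogeneous system `hGD_{n,m}(L)`, i.e. the
constant coefficient vectors `c` supported on `J_{n,m}` such that
`∑_{j ∈ J_{n,m}} c_j B_j` commutes with `L`. -/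
def VmSet {R : Type} [Ring R] (d : R →+ R) (L : AddMonoid.End R)
    (B : ℕ → AddMonoid.End R) (n m : ℕ) : Set (ℕ → R) :=
  {c | (∀ j, d (c j) = 0) ∧ (∀ j ∉ Jset n m, c j = 0) ∧
       theta c B (Jset n m) ∈ Cent d L}

/-- `F_m`: the constant solutions of the inhomogeneous system `GD_{n,m}(L)`, i.e. the
constant coefficient vectors `c` supported on `J_{n,m−1}` such that
`B_m + ∑_{j ∈ J_{n,m−1}} c_j B_j` commutes with `L`. -/
def FmSet {R : Type} [Ring R] (d : R →+ R) (L : AddMonoid.End R)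
    (B : ℕ → AddMonoid.End R) (n m : ℕ) : Set (ℕ → R) :=
  {c | (∀ j, d (c j) = 0) ∧ (∀ j ∉ Jset n (m - 1), c j = 0) ∧
       B m + theta c B (Jset n (m - 1)) ∈ Cent d L}

lemma AddSubgroup.map₂_mem_of_mem_closure {M N P : Type*} [AddGroup M] [AddGroup N]
    [AddCommGroup P] (f : M →+ N →+ P) {S : Set M} {T : Set N} {U : AddSubgroup P}
    (h : ∀ x ∈ S, ∀ y ∈ T, f x y ∈ U) {x : M} {y : N} (hx : x ∈ AddSubgroup.closure S)
    (hy : y ∈ AddSubgroup.closure T) : f x y ∈ U := by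
  have hS : ∀ x ∈ S, AddSubgroup.closure T ≤ U.comap (f x) := fun x hx =>
    (AddSubgroup.closure_le _).mpr fun y hy => h x hx y hy
  exact (AddSubgroup.closure_le (K := U.comap (f.flip y))).mpr (fun x hx' => hS x hx' hy) hx

section Operators

variable {d : R →+ R}

lemma mulOp_add (a b : R) : mulOp (a + b) = mulOp a + mulOp b :=
  AddMonoidHom.ext fun x => add_mul a b x

lemma mulOp_mul (a b : R) : mulOp (a * b) = mulOp a * mulOp b :=
  AddMonoidHom.ext fun x => mul_assoc a b x

@[simp] lemma mulOp_zero : mulOp (0 : R) = 0 :=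
  AddMonoidHom.ext fun x => zero_mul x

@[simp] lemma mulOp_one : mulOp (1 : R) = 1 :=
  AddMonoidHom.ext fun x => one_mul x

lemma mulOp_neg (a : R) : mulOp (-a) = -mulOp a :=
  AddMonoidHom.ext fun x => neg_mul a x

lemma mulOp_natCast_mul (k : ℕ) (a : R) : mulOp (k * a) = k • mulOp a :=
  AddMonoidHom.ext fun x => by
    show (k : R) * a * x = k • (a * x)
    rw [nsmul_eq_mul, mul_assoc]

lemma mulOp_eq_zero {a : R} : mulOp a = 0 ↔ a = 0 :=
  ⟨fun h => (mul_one a).symm.trans (DFunLike.congr_fun h 1), fun h => h ▸ mulOp_zero⟩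

lemma derOp_mul_mulOp (hd : IsDeriv d) (a : R) :
    derOp d * mulOp a = mulOp a * derOp d + mulOp (d a) :=
  AddMonoidHom.ext fun x => (hd a x).trans (add_comm _ _)

/-- Operators of order `< k`. Unlike `OpLE d (k - 1)`, this is `⊥` for `k = 0`. -/
def OpLT (d : R →+ R) : ℕ → AddSubgroup (AddMonoid.End R)
  | 0 => ⊥
  | k + 1 => OpLE d k

lemma opLE_mono {k l : ℕ} (h : k ≤ l) : OpLE d k ≤ OpLE d l :=
  AddSubgroup.closure_mono fun _ ⟨a, i, hi, hP⟩ => ⟨a, i, hi.trans h, hP⟩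

lemma opLT_mono {k l : ℕ} (h : k ≤ l) : OpLT d k ≤ OpLT d l := by
  rcases k with _ | k
  · exact bot_le
  · obtain ⟨l, rfl⟩ : ∃ l', l = l' + 1 := ⟨l - 1, by omega⟩
    exact opLE_mono (by omega)

lemma opLT_le_opLE (k : ℕ) : OpLT d k ≤ OpLE d k := by
  rcases k with _ | k
  · exact bot_le
  · exact opLE_mono k.le_succ

lemma opLT_eq_opLE_sub_one {k : ℕ} (hk : k ≠ 0) : OpLT d k = OpLE d (k - 1) := by
  obtain ⟨k, rfl⟩ := Nat.exists_eq_succ_of_ne_zero hk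
  rfl

lemma mulOp_mul_pow_mem_opLE (a : R) {i k : ℕ} (h : i ≤ k) :
    mulOp a * derOp d ^ i ∈ OpLE d k :=
  AddSubgroup.subset_closure ⟨a, i, h, rfl⟩

lemma mulOp_mul_pow_mem_opLT (a : R) {i k : ℕ} (h : i < k) :
    mulOp a * derOp d ^ i ∈ OpLT d k := by
  obtain ⟨k, rfl⟩ : ∃ k', k = k' + 1 := ⟨k - 1, by omega⟩
  exact mulOp_mul_pow_mem_opLE a (by omega)

lemma derOp_pow_mem_opLT {i k : ℕ} (h : i < k) : derOp d ^ i ∈ OpLT d k := by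
  simpa using mulOp_mul_pow_mem_opLT (d := d) (1 : R) h

lemma opLE_le {k : ℕ} {K : AddSubgroup (AddMonoid.End R)}
    (h : ∀ (a : R) (i : ℕ), i ≤ k → mulOp a * derOp d ^ i ∈ K) : OpLE d k ≤ K :=
  (AddSubgroup.closure_le _).mpr fun _ ⟨a, i, hi, hP⟩ => hP ▸ h a i hi

lemma mulOp_mul_mem_opLE (a : R) {k : ℕ} {P : AddMonoid.End R} (hP : P ∈ OpLE d k) :
    mulOp a * P ∈ OpLE d k := by
  refine opLE_le (K := (OpLE d k).comap (AddMonoidHom.mulLeft (mulOp a))) (fun b i hi => ?_) hP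
  simp only [AddSubgroup.mem_comap, AddMonoidHom.coe_mulLeft, ← mul_assoc, ← mulOp_mul]
  exact mulOp_mul_pow_mem_opLE _ hi

lemma mulOp_mul_mem_opLT (a : R) {k : ℕ} {P : AddMonoid.End R} (hP : P ∈ OpLT d k) :
    mulOp a * P ∈ OpLT d k := by
  rcases k with _ | k
  · rw [AddSubgroup.mem_bot.mp hP, mul_zero]; exact zero_mem _
  · exact mulOp_mul_mem_opLE a hP

lemma mul_pow_mem_opLT (j : ℕ) {k : ℕ} {P : AddMonoid.End R} (hP : P ∈ OpLT d k) :
    P * derOp d ^ j ∈ OpLT d (k + j) := by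
  rcases k with _ | k
  · rw [AddSubgroup.mem_bot.mp hP, zero_mul]; exact zero_mem _
  · rw [Nat.add_right_comm]
    refine opLE_le (K := (OpLE d (k + j)).comap (AddMonoidHom.mulRight (derOp d ^ j)))
      (fun b i hi => ?_) hP
    simp only [AddSubgroup.mem_comap, AddMonoidHom.coe_mulRight, mul_assoc, ← pow_add]
    exact mulOp_mul_pow_mem_opLE _ (by omega)

lemma derOp_mul_mem_opLT (hd : IsDeriv d) {k : ℕ} {P : AddMonoid.End R} (hP : P ∈ OpLT d k) :
    derOp d * P ∈ OpLT d (k + 1) := by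
  rcases k with _ | k
  · rw [AddSubgroup.mem_bot.mp hP, mul_zero]; exact zero_mem _
  · refine opLE_le (K := (OpLE d (k + 1)).comap (AddMonoidHom.mulLeft (derOp d)))
      (fun b i hi => ?_) hP
    simp only [AddSubgroup.mem_comap, AddMonoidHom.coe_mulLeft]
    rw [← mul_assoc, derOp_mul_mulOp hd, add_mul, mul_assoc, ← pow_succ']
    exact add_mem (mulOp_mul_pow_mem_opLE _ (by omega)) (mulOp_mul_pow_mem_opLE _ (by omega))

lemma exists_sub_mulOp_mul_pow_mem_opLT {k : ℕ} {A : AddMonoid.End R}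
    (hA : A ∈ OpLE d k) : ∃ a : R, A - mulOp a * derOp d ^ k ∈ OpLT d k := by
  refine AddSubgroup.closure_induction (fun P ⟨b, i, hi, hP⟩ => ?_) ⟨0, by simp⟩
    (fun P Q _ _ ⟨a, ha⟩ ⟨b, hb⟩ => ⟨a + b, ?_⟩) (fun P _ ⟨a, ha⟩ => ⟨-a, ?_⟩) hA
  · rcases hi.lt_or_eq with hi | rfl
    · exact ⟨0, by simpa [hP] using mulOp_mul_pow_mem_opLT b hi⟩
    · exact ⟨b, by simp [hP]⟩
  · convert add_mem ha hb using 1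
    rw [mulOp_add, add_mul]; abel
  · convert neg_mem ha using 1
    rw [mulOp_neg, show -mulOp a * derOp d ^ k = -(mulOp a * derOp d ^ k) from neg_mul (mulOp a) _]
    abel

lemma derOp_pow_commutator_sub_mem (hd : IsDeriv d) (t : R) (i : ℕ) :
    derOp d ^ (i + 1) * mulOp t - mulOp t * derOp d ^ (i + 1)
      - (i + 1) • (mulOp (d t) * derOp d ^ i) ∈ OpLT d i := by
  induction i with
  | zero =>
    rw [zero_add, one_smul, pow_one, pow_zero, mul_one, derOp_mul_mulOp hd, add_sub_cancel_left,
      sub_self]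
    exact zero_mem _
  | succ i ih =>
    have hdt : ∀ u : R, derOp d * mulOp u - mulOp u * derOp d - mulOp (d u) = 0 := fun u => by
      rw [derOp_mul_mulOp hd]; abel
    have h : derOp d ^ (i + 1 + 1) * mulOp t - mulOp t * derOp d ^ (i + 1 + 1)
        - (i + 1 + 1) • (mulOp (d t) * derOp d ^ (i + 1))
        = derOp d * (derOp d ^ (i + 1) * mulOp t - mulOp t * derOp d ^ (i + 1)
            - (i + 1) • (mulOp (d t) * derOp d ^ i))
          + (i + 1) • (mulOp (d (d t)) * derOp d ^ i) := by
      rw [← sub_eq_zero, pow_succ' _ (i + 1), pow_succ' _ i]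
      calc _ = (derOp d * mulOp t - mulOp t * derOp d - mulOp (d t)) * (derOp d * derOp d ^ i)
            + (i + 1) • ((derOp d * mulOp (d t) - mulOp (d t) * derOp d - mulOp (d (d t)))
              * derOp d ^ i) := by
              simp only [mul_sub, sub_mul, mul_add, mul_smul_comm, nsmul_sub, mul_assoc,
                add_smul, one_smul]
              abel
        _ = 0 := by rw [hdt, hdt]; simp
    rw [h]
    exact add_mem (derOp_mul_mem_opLT hd ih)
      (nsmul_mem (mulOp_mul_pow_mem_opLT _ i.lt_succ_self) _)

lemma derOp_pow_commutator_mem (hd : IsDeriv d) (t : R) (i : ℕ) :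
    derOp d ^ i * mulOp t - mulOp t * derOp d ^ i ∈ OpLT d i := by
  rcases i with _ | i
  · rw [pow_zero, one_mul, mul_one, sub_self]; exact zero_mem _
  · rw [← sub_add_cancel (_ - _) ((i + 1) • (mulOp (d t) * derOp d ^ i))]
    exact add_mem (opLT_mono i.le_succ (derOp_pow_commutator_sub_mem hd t i))
      (nsmul_mem (mulOp_mul_pow_mem_opLT _ i.lt_succ_self) _)

lemma mul_mem_opLE (hd : IsDeriv d) {p q : ℕ} {P Q : AddMonoid.End R} (hP : P ∈ OpLE d p)
    (hQ : Q ∈ OpLE d q) : P * Q ∈ OpLE d (p + q) := by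
  refine AddSubgroup.map₂_mem_of_mem_closure AddMonoidHom.mul ?_ hP hQ
  rintro _ ⟨a, i, hi, rfl⟩ _ ⟨b, j, hj, rfl⟩
  have h : mulOp a * derOp d ^ i * (mulOp b * derOp d ^ j)
      = mulOp (a * b) * derOp d ^ (i + j)
        + mulOp a * (derOp d ^ i * mulOp b - mulOp b * derOp d ^ i) * derOp d ^ j := by
    rw [mulOp_mul, pow_add, mul_sub, sub_mul]; simp only [mul_assoc]; abel
  rw [AddMonoidHom.mul_apply, h]
  exact add_mem (mulOp_mul_pow_mem_opLE _ (by omega)) (opLE_mono (by omega) (opLT_le_opLE _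
    (mul_pow_mem_opLT j (mulOp_mul_mem_opLT a (derOp_pow_commutator_mem hd b i)))))

lemma mul_mem_opLT (hd : IsDeriv d) {p q : ℕ} {P Q : AddMonoid.End R} (hP : P ∈ OpLT d p)
    (hQ : Q ∈ OpLT d q) : P * Q ∈ OpLT d (p + q - 1) := by
  rcases p with _ | p
  · rw [AddSubgroup.mem_bot.mp hP, zero_mul]; exact zero_mem _
  rcases q with _ | q
  · rw [AddSubgroup.mem_bot.mp hQ, mul_zero]; exact zero_mem _
  rw [show p + 1 + (q + 1) - 1 = p + q + 1 by omega]
  exact mul_mem_opLE hd hP hQ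

lemma exists_deriv_ne_zero {L : AddMonoid.End R} {n : ℕ} (hL : HasOrd d L n)
    (hn : 1 ≤ n) : ∃ t, d t ≠ 0 := by
  by_contra! h
  have hder : derOp d = 0 := AddMonoidHom.ext h
  refine absurd (hL.2 0 (opLE_le (fun a i _ => ?_) hL.1)) (by omega)
  rcases i with _ | i
  · exact mulOp_mul_pow_mem_opLE a le_rfl
  · rw [hder, zero_pow i.succ_ne_zero, mul_zero]; exact zero_mem _

lemma pow_mem_opLE (hd : IsDeriv d) {L : AddMonoid.End R} {n : ℕ} (hL : L ∈ OpLE d n) (q : ℕ) :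
    L ^ q ∈ OpLE d (n * q) := by
  induction q with
  | zero => simpa using mulOp_mul_pow_mem_opLE (d := d) (1 : R) (i := 0) (k := 0) le_rfl
  | succ q ih => exact pow_succ L q ▸ mul_mem_opLE hd ih hL

lemma pow_sub_pow_mem_opLT (hd : IsDeriv d) {L : AddMonoid.End R} {n : ℕ} (hL : L ∈ OpLE d n)
    (hmon : L - derOp d ^ n ∈ OpLT d n) (q : ℕ) :
    L ^ q - derOp d ^ (n * q) ∈ OpLT d (n * q) := by
  induction q with
  | zero => simp [OpLT]
  | succ q ih =>
    have e : L ^ (q + 1) - derOp d ^ (n * (q + 1))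
        = (L ^ q - derOp d ^ (n * q)) * L + derOp d ^ (n * q) * (L - derOp d ^ n) := by
      rw [sub_mul, mul_sub, ← pow_succ, ← pow_add, ← Nat.mul_succ]; abel
    rw [e]
    exact add_mem (opLT_mono (by rw [Nat.mul_succ]; omega) (mul_mem_opLT hd ih (q := n + 1) hL))
      (opLT_mono (by rw [Nat.mul_succ]; omega)
        (mul_mem_opLT hd (derOp_pow_mem_opLT (n * q).lt_succ_self) hmon))

end Operators

section CommRing

variable {K : Type} [CommRing K] {d : K →+ K}

lemma commute_mulOp_of_deriv_eq_zero (hd : IsDeriv d) {c : K} (hc : d c = 0)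
    {P : AddMonoid.End K} (hP : IsOp d P) : Commute (mulOp c) P := by
  obtain ⟨k, hk⟩ := hP
  have hcd : Commute (mulOp c) (derOp d) := by
    rw [Commute, SemiconjBy, derOp_mul_mulOp hd, hc, mulOp_zero, add_zero]
  have hP : P ∈ (Subring.centralizer {mulOp c}).toAddSubgroup :=
    opLE_le (fun a i _ => Subring.mem_centralizer_iff.mpr fun _ hg =>
      (Set.mem_singleton_iff.mp hg) ▸
        ((Commute.all c a).map (Module.toAddMonoidEnd K K)).mul_right (hcd.pow_right i)) hk
  exact Subring.mem_centralizer_iff.mp hP _ rfl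

lemma cPoly_subset_cent (hd : IsDeriv d) {L : AddMonoid.End K} {n : ℕ} (hL : L ∈ OpLE d n) :
    CPoly d L ⊆ Cent d L := by
  rintro _ ⟨p, hp, rfl⟩
  refine ⟨⟨n * p.natDegree, sum_mem fun i hi => mulOp_mul_mem_opLE _ (opLE_mono
      (Nat.mul_le_mul_left n (Nat.lt_succ_iff.mp (Finset.mem_range.mp hi)))
      (pow_mem_opLE hd hL i))⟩,
    Commute.sum_right _ _ _ fun i _ => ?_⟩
  exact (commute_mulOp_of_deriv_eq_zero hd (hp i) ⟨n, hL⟩).symm.mul_right (Commute.self_pow L i)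

lemma commutator_mem_opLT (hd : IsDeriv d) {p q : ℕ} {P Q : AddMonoid.End K}
    (hP : P ∈ OpLT d p) (hQ : Q ∈ OpLT d q) : P * Q - Q * P ∈ OpLT d (p + q - 2) := by
  rcases p with _ | p
  · rw [AddSubgroup.mem_bot.mp hP, zero_mul, mul_zero, sub_zero]; exact zero_mem _
  rcases q with _ | q
  · rw [AddSubgroup.mem_bot.mp hQ, zero_mul, mul_zero, sub_zero]; exact zero_mem _
  rw [show p + 1 + (q + 1) - 2 = p + q by omega]
  refine AddSubgroup.map₂_mem_of_mem_closure (AddMonoidHom.mul - AddMonoidHom.mul.flip) ?_ hP hQ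
  rintro _ ⟨a, i, hi, rfl⟩ _ ⟨b, j, hj, rfl⟩
  have h : mulOp a * derOp d ^ i * (mulOp b * derOp d ^ j)
      - mulOp b * derOp d ^ j * (mulOp a * derOp d ^ i)
      = mulOp a * (derOp d ^ i * mulOp b - mulOp b * derOp d ^ i) * derOp d ^ j
        - mulOp b * (derOp d ^ j * mulOp a - mulOp a * derOp d ^ j) * derOp d ^ i := by
    have hab : mulOp a * mulOp b = mulOp b * mulOp a := by rw [← mulOp_mul, mul_comm, mulOp_mul]
    have hij : derOp d ^ j * derOp d ^ i = derOp d ^ i * derOp d ^ j :=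
      (Commute.pow_pow_self _ _ _).eq
    simp only [mul_sub, sub_mul, mul_assoc]
    rw [← mul_assoc (mulOp a) (mulOp b), hab, hij]
    simp only [mul_assoc]
    abel
  simp only [AddMonoidHom.sub_apply, AddMonoidHom.flip_apply, AddMonoidHom.mul_apply, h]
  exact sub_mem
    (opLT_mono (by omega) (mul_pow_mem_opLT j (mulOp_mul_mem_opLT a
      (derOp_pow_commutator_mem hd b i))))
    (opLT_mono (by omega) (mul_pow_mem_opLT i (mulOp_mul_mem_opLT b
      (derOp_pow_commutator_mem hd a j))))

variable [IsDomain K] [CharZero K]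

lemma eq_zero_of_mulOp_mul_pow_mem_opLT (hd : IsDeriv d) {t : K} (ht : d t ≠ 0) {c : K} {k : ℕ}
    (h : mulOp c * derOp d ^ k ∈ OpLT d k) : c = 0 := by
  induction k generalizing c with
  | zero =>
    rw [pow_zero, mul_one] at h
    exact mulOp_eq_zero.mp (AddSubgroup.mem_bot.mp h)
  | succ k ih =>
    -- commuting with `t` lowers the order by one, the top coefficient becoming `c (k + 1) (d t)`
    suffices h' : mulOp (c * ((k + 1 : ℕ) * d t)) * derOp d ^ k ∈ OpLT d k from
      (mul_eq_zero.mp (ih h')).resolve_right (mul_ne_zero (Nat.cast_ne_zero.mpr k.succ_ne_zero) ht)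
    have hct : mulOp t * mulOp c = mulOp c * mulOp t := by
      rw [← mulOp_mul, mul_comm, mulOp_mul]
    have e : mulOp (c * ((k + 1 : ℕ) * d t)) * derOp d ^ k
        = (mulOp c * derOp d ^ (k + 1) * mulOp t - mulOp t * (mulOp c * derOp d ^ (k + 1)))
          - mulOp c * (derOp d ^ (k + 1) * mulOp t - mulOp t * derOp d ^ (k + 1)
            - (k + 1) • (mulOp (d t) * derOp d ^ k)) := by
      rw [mulOp_mul, mulOp_natCast_mul, ← mul_assoc (mulOp t), hct]
      simp only [mul_sub, mul_assoc, mul_smul_comm, smul_mul_assoc]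
      abel
    rw [e]
    exact sub_mem (commutator_mem_opLT hd h (by simpa using mulOp_mul_pow_mem_opLT t zero_lt_one))
      (mulOp_mul_mem_opLT c (derOp_pow_commutator_sub_mem hd t k))

lemma deriv_eq_zero_of_commutator_mem_opLT (hd : IsDeriv d) {t : K} (ht : d t ≠ 0)
    {L A : AddMonoid.End K} {n k : ℕ} {a : K} (hn : 1 ≤ n)
    (hnf : L - derOp d ^ n ∈ OpLE d (n - 2)) (hA : A - mulOp a * derOp d ^ k ∈ OpLT d k)
    (hLA : L * A - A * L ∈ OpLT d (n + k - 1)) : d a = 0 := by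
  obtain ⟨n, rfl⟩ : ∃ n', n = n' + 1 := ⟨n - 1, by omega⟩
  rw [show n + 1 + k - 1 = n + k by omega] at hLA
  have hA' : A ∈ OpLT d (k + 1) :=
    sub_add_cancel A (mulOp a * derOp d ^ k) ▸
      add_mem (opLT_mono k.le_succ hA) (mulOp_mul_pow_mem_opLT a k.lt_succ_self)
  -- every term on the right has order `< n + k`
  have e : mulOp ((n + 1 : ℕ) * d a) * derOp d ^ (n + k)
      = (L * A - A * L)
        - (derOp d ^ (n + 1) * (A - mulOp a * derOp d ^ k)
          - (A - mulOp a * derOp d ^ k) * derOp d ^ (n + 1))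
        - ((L - derOp d ^ (n + 1)) * A - A * (L - derOp d ^ (n + 1)))
        - (derOp d ^ (n + 1) * mulOp a - mulOp a * derOp d ^ (n + 1)
          - (n + 1) • (mulOp (d a) * derOp d ^ n)) * derOp d ^ k := by
    have hk : derOp d ^ k * derOp d ^ (n + 1) = derOp d ^ (n + 1) * derOp d ^ k :=
      (Commute.pow_pow_self _ _ _).eq
    rw [mulOp_natCast_mul, pow_add]
    simp only [mul_sub, sub_mul, mul_assoc, smul_mul_assoc, hk]
    abel
  have hlead : mulOp ((n + 1 : ℕ) * d a) * derOp d ^ (n + k) ∈ OpLT d (n + k) := by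
    rw [e]
    refine sub_mem (sub_mem (sub_mem hLA ?_) ?_)
      (mul_pow_mem_opLT k (derOp_pow_commutator_sub_mem hd a n))
    · exact opLT_mono (by omega) (commutator_mem_opLT hd (derOp_pow_mem_opLT (n + 1).lt_succ_self) hA)
    · exact opLT_mono (by omega) (commutator_mem_opLT hd (p := n + 1 - 2 + 1) hnf hA')
  exact (mul_eq_zero.mp (eq_zero_of_mulOp_mul_pow_mem_opLT hd ht hlead)).resolve_left
    (Nat.cast_ne_zero.mpr n.succ_ne_zero)

lemma exists_const_coeffs_of_commutator_mem_opLT (hd : IsDeriv d) {t : K} (ht : d t ≠ 0)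
    {L : AddMonoid.End K} {n : ℕ} (hn : 1 ≤ n) (hnf : L - derOp d ^ n ∈ OpLE d (n - 2))
    {b : ℕ → AddMonoid.End K}
    (hb : ∀ j, b j - derOp d ^ j ∈ OpLT d j) (hLb : ∀ j, L * b j - b j * L ∈ OpLT d (n - 1))
    {k : ℕ} {A : AddMonoid.End K} (hA : A ∈ OpLT d k) (hLA : L * A - A * L ∈ OpLT d (n - 1)) :
    ∃ c : ℕ → K, (∀ j, d (c j) = 0) ∧ A = ∑ j ∈ Finset.range k, mulOp (c j) * b j := by
  induction k generalizing A with
  | zero => exact ⟨0, fun _ => map_zero d, by simpa [OpLT] using hA⟩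
  | succ k ih =>
    obtain ⟨a, ha⟩ := exists_sub_mulOp_mul_pow_mem_opLT hA
    have hda : d a = 0 :=
      deriv_eq_zero_of_commutator_mem_opLT hd ht hn hnf ha (opLT_mono (by omega) hLA)
    have hL : IsOp d L := ⟨n, sub_add_cancel L (derOp d ^ n) ▸
      add_mem (opLE_mono (n.sub_le 2) hnf)
        (by simpa using mulOp_mul_pow_mem_opLE (d := d) 1 le_rfl)⟩
    have hLa : L * mulOp a = mulOp a * L := (commute_mulOp_of_deriv_eq_zero hd hda hL).eq.symm
    have hA₁ : A - mulOp a * b k ∈ OpLT d k := by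
      have e : A - mulOp a * b k
          = (A - mulOp a * derOp d ^ k) - mulOp a * (b k - derOp d ^ k) := by
        rw [mul_sub]; abel
      exact e ▸ sub_mem ha (mulOp_mul_mem_opLT a (hb k))
    have hLA₁ : L * (A - mulOp a * b k) - (A - mulOp a * b k) * L ∈ OpLT d (n - 1) := by
      have e : L * (A - mulOp a * b k) - (A - mulOp a * b k) * L
          = (L * A - A * L) - mulOp a * (L * b k - b k * L) := by
        rw [mul_sub, sub_mul, ← mul_assoc, hLa]; simp only [mul_sub, mul_assoc]; abel
      exact e ▸ sub_mem hLA (mulOp_mul_mem_opLT a (hLb k))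
    obtain ⟨c, hc, hAc⟩ := ih hA₁ hLA₁
    refine ⟨Function.update c k a, fun j => ?_, ?_⟩
    · rcases eq_or_ne j k with rfl | hj
      · simpa using hda
      · simpa [hj] using hc j
    · rw [Finset.sum_range_succ, Function.update_self, ← sub_eq_iff_eq_add, hAc]
      exact Finset.sum_congr rfl fun j hj => by
        rw [Function.update_of_ne (Finset.mem_range.mp hj).ne]

end CommRing

lemma sum_mulOp_mul_pow_mem_cPoly {d : R →+ R} (L : AddMonoid.End R) {ι : Type*} (s : Finset ι)
    {c : ι → R} (hc : ∀ i, d (c i) = 0) (e : ι → ℕ) :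
    ∑ i ∈ s, mulOp (c i) * L ^ e i ∈ CPoly d L := by
  refine ⟨∑ i ∈ s, Polynomial.monomial (e i) (c i), fun k => ?_, ?_⟩
  · simp [Polynomial.finsetSum_coeff, Polynomial.coeff_monomial, apply_ite d, hc]
  -- `Module.toAddMonoidEnd R R` is `mulOp` as a ring hom
  · refine .symm ((Polynomial.eval₂_eq_sum_range (Module.toAddMonoidEnd R R) L).symm.trans ?_)
    rw [Polynomial.eval₂_finsetSum]
    simp only [Polynomial.eval₂_monomial]
    rfl

/-- For `n ∣ j` the paper's basis element is `(L ^ (j / n))₊ = L ^ (j / n)`; the hypotheses on `B`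
only fix `B j` up to lower order terms. -/
def powBasis (L : AddMonoid.End R) (B : ℕ → AddMonoid.End R) (n j : ℕ) : AddMonoid.End R :=
  if n ∣ j then L ^ (j / n) else B j

section Basis

variable {d : R →+ R} {L : AddMonoid.End R} {B : ℕ → AddMonoid.End R} {n : ℕ}

lemma powBasis_sub_pow_mem_opLT (hd : IsDeriv d) (hn : 1 ≤ n) (hL : MonicOrd d L n)
    (hB : ∀ j, B j - derOp d ^ j ∈ OpLE d (j - 1)) (j : ℕ) :
    powBasis L B n j - derOp d ^ j ∈ OpLT d j := by
  unfold powBasis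
  split_ifs with hj
  · obtain ⟨q, rfl⟩ := hj
    rw [Nat.mul_div_cancel_left q hn]
    exact pow_sub_pow_mem_opLT hd hL.1.1
      (opLT_eq_opLE_sub_one (d := d) (k := n) (by omega) ▸ hL.2) q
  · rw [opLT_eq_opLE_sub_one (by rintro rfl; exact hj (dvd_zero n))]
    exact hB j

lemma commutator_powBasis_mem_opLT (hn : 1 ≤ n)
    (hB : ∀ j, L * B j - B j * L ∈ OpLE d (n - 2)) (j : ℕ) :
    L * powBasis L B n j - powBasis L B n j * L ∈ OpLT d (n - 1) := by
  unfold powBasis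
  split_ifs with hj
  · rw [(Commute.self_pow L _).eq, sub_self]; exact zero_mem _
  · have hn1 : n ≠ 1 := by rintro rfl; exact hj (one_dvd j)
    rw [opLT_eq_opLE_sub_one (by omega)]
    exact hB j

lemma sum_powBasis_eq (c : ℕ → R) (m : ℕ) :
    ∑ j ∈ Finset.range (m + 1), mulOp (c j) * powBasis L B n j
      = ∑ j ∈ (Finset.range (m + 1)).filter (n ∣ ·), mulOp (c j) * L ^ (j / n)
        + theta c B (Jset n m) := by
  rw [← Finset.sum_filter_add_sum_filter_not _ (n ∣ ·)]
  congr 1 <;> refine Finset.sum_congr rfl fun j hj => ?_ <;>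
    simp [powBasis, (Finset.mem_filter.mp hj).2]

lemma theta_jset_eq_zero (hB : ∀ j, B j ∈ OpLE d j) {m : ℕ}
    (hV : ∀ c ∈ VmSet d L B n m, ∀ j, c j = 0) {c : ℕ → R} (hc : ∀ j, d (c j) = 0)
    (hθ : Commute L (theta c B (Jset n m))) : theta c B (Jset n m) = 0 := by
  set c' : ℕ → R := fun j => if j ∈ Jset n m then c j else 0
  have hθ' : theta c' B (Jset n m) = theta c B (Jset n m) :=
    Finset.sum_congr rfl fun j hj => by simp [c', hj]
  have hop : IsOp d (theta c B (Jset n m)) :=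
    ⟨m, sum_mem fun j hj => mulOp_mul_mem_opLE _ (opLE_mono (by
      simpa [Jset, Nat.lt_succ_iff] using (Finset.mem_filter.mp hj).1) (hB j))⟩
  have hc' : c' ∈ VmSet d L B n m :=
    ⟨fun j => by by_cases hj : j ∈ Jset n m <;> simp [c', hj, hc], fun j hj => by simp [c', hj],
      hθ' ▸ ⟨hop, hθ⟩⟩
  rw [← hθ']
  simp [theta, hV c' hc']

end Basis

/-- If for every positive integer `m` not divisible by `n` the
homogeneous system `hGD_{n,m}(L)` has only the zero constant solution, then the
centralizer of `L` is trivial: `Z(L) = C[L]`. -/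
theorem trivial_centralizer_of_trivial_flag {F : Type} [Field F] [CharZero F]
    (d : F →+ F) (hd : IsDeriv d) (L : AddMonoid.End F) (n : ℕ) (hn : 1 ≤ n)
    (hL : MonicOrd d L n)
    (hnf : L - derOp d ^ n ∈ OpLE d (n - 2))
    (B : ℕ → AddMonoid.End F)
    (hB : ∀ j, B j ∈ OpLE d j ∧ B j - derOp d ^ j ∈ OpLE d (j - 1) ∧
      L * B j - B j * L ∈ OpLE d (n - 2))
    (hV : ∀ m : ℕ, 0 < m → ¬ (n ∣ m) → ∀ c ∈ VmSet d L B n m, ∀ j, c j = 0) :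
    Cent d L = CPoly d L := by
  obtain ⟨t, ht⟩ := exists_deriv_ne_zero hL.1 hn
  refine Set.Subset.antisymm (fun A ⟨⟨N, hAN⟩, hLA⟩ => ?_) (cPoly_subset_cent hd hL.1.1)
  obtain ⟨m, hNm, hnm⟩ : ∃ m, N ≤ m ∧ (n = 1 ∨ ¬ n ∣ m) :=
    ⟨n * N + 1, (Nat.le_mul_of_pos_left N hn).trans (n * N).le_succ, (eq_or_ne n 1).imp_right
      fun hn1 h => hn1 (Nat.dvd_one.mp ((Nat.dvd_add_right (dvd_mul_right n N)).mp h))⟩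
  obtain ⟨c, hc, hAc⟩ := exists_const_coeffs_of_commutator_mem_opLT hd ht hn hnf
    (powBasis_sub_pow_mem_opLT hd hn hL fun j => (hB j).2.1)
    (commutator_powBasis_mem_opLT hn fun j => (hB j).2.2) (k := m + 1) (opLE_mono hNm hAN)
    (by rw [hLA, sub_self]; exact zero_mem _)
  rw [sum_powBasis_eq] at hAc
  have hQ := sum_mulOp_mul_pow_mem_cPoly L ((Finset.range (m + 1)).filter (n ∣ ·)) hc (· / n)
  have hθ : theta c B (Jset n m) = 0 := by
    rcases hnm with rfl | hnm
    · simp [theta, Jset]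
    refine theta_jset_eq_zero (fun j => (hB j).1) (hV m (Nat.pos_of_ne_zero ?_) hnm) hc ?_
    · rintro rfl; exact hnm (dvd_zero n)
    · rw [eq_sub_of_add_eq' hAc.symm]
      exact Commute.sub_right hLA (cPoly_subset_cent hd hL.1.1 hQ).2
  rwa [hAc, hθ, add_zero]
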